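/- Let (S, ⪯) be a connected standard discrete poset, let X₁, X₂, … be IID random variables on S with common PDF f having support S, and let Y₁, Y₂, … be the associated ladder variables. If for every y ∈ S the conditional distribution of Y₁ given Y₂ = y is uniform on D[y], i.e. P(Y₁ = x | Y₂ = y) = 1/#(D[y]) for every x ⪯ y, then f has constant rate: there is α > 0 with f(x) = α F(x) for all x ∈ S. -/

import Mathlib

/-!
For `x ≤ y`, the event `{Y₁ = x, Y₂ = y}` is, up to a null set, the disjoint union over `m` of
`{X₁ = x, X₂, …, X_{m+1} ⋡ x, X_{m+2} = y}`, so independence and a geometric series give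
`P(Y₁ = x, Y₂ = y) = f(x) f(y) / F(x)`. Hence the conditional law of `Y₁` given `Y₂ = y` is
proportional to the rate `f / F` on `D[y]`; uniformity forces `f(x) / F(x) = f(y) / F(y)` for all
`x ≤ y`, and connectedness spreads this along chains of comparable points to all of `S`.
-/

open scoped ENNReal NNReal
open MeasureTheory ProbabilityTheory

/-- The upper probability function (UPF) of a density `f` on a discrete poset:
`F x = ∑_{t ⪰ x} f t`, computed in `[0,∞]`. -/
noncomputable def upf {S : Type*} [PartialOrder S] (f : S → ℝ≥0) (x : S) : ℝ≥0∞ :=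
  ∑' t : {t : S // x ≤ t}, (f t : ℝ≥0∞)

/-- The ladder times of a sequence `X₀, X₁, X₂, …`: `N₀ = 0` and
`N_{n+1} = min {m > N_n : X_m ⪰ X_{N_n}}` (indexed from `0`, so `ladderTime X n`
is the `(n+1)`-st ladder time of the paper). -/
noncomputable def ladderTime {Ω S : Type*} [PartialOrder S] (X : ℕ → Ω → S) :
    ℕ → Ω → ℕ
  | 0 => fun _ => 0
  | (n + 1) => fun ω =>
      sInf {m : ℕ | ladderTime X n ω < m ∧ X (ladderTime X n ω) ω ≤ X m ω}

/-- The ladder variables: `Y_n = X_{N_n}` (indexed from `0`, so `ladderVar X n` is the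
`(n+1)`-st ladder variable of the paper; in particular `ladderVar X 0 = Y₁` and
`ladderVar X 1 = Y₂`). -/
noncomputable def ladderVar {Ω S : Type*} [PartialOrder S] (X : ℕ → Ω → S)
    (n : ℕ) (ω : Ω) : S :=
  X (ladderTime X n ω) ω

open Set Function

theorem eq_of_comparable_chain {S β : Type*} [PartialOrder S] {g : S → β}
    (hg : ∀ x y, x ≤ y → g x = g y) {c : ℕ → S} {n : ℕ}
    (hc : ∀ i < n, c i ≤ c (i + 1) ∨ c (i + 1) ≤ c i) : g (c 0) = g (c n) := by
  induction n with
  | zero => rfl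
  | succ k ih =>
    rw [ih fun i hi => hc i (by omega)]
    rcases hc k (by omega) with h | h
    exacts [hg _ _ h, (hg _ _ h).symm]

section Ladder

variable {Ω S : Type*} [PartialOrder S] {X : ℕ → Ω → S} {x y : S} {m : ℕ} {ω : Ω}

theorem ladderTime_one_eq_succ_iff :
    ladderTime X 1 ω = m + 1 ↔
      X 0 ω ≤ X (m + 1) ω ∧ ∀ k, 0 < k → k ≤ m → ¬ X 0 ω ≤ X k ω := by
  change sInf {k | 0 < k ∧ X 0 ω ≤ X k ω} = m + 1 ↔ _
  constructor
  · intro h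
    have hne : {k | 0 < k ∧ X 0 ω ≤ X k ω}.Nonempty :=
      Nat.nonempty_of_pos_sInf (by omega)
    refine ⟨h ▸ (Nat.sInf_mem hne).2, fun k hk hkm hle => ?_⟩
    exact Nat.notMem_of_lt_sInf (s := {k | 0 < k ∧ X 0 ω ≤ X k ω}) (by omega) ⟨hk, hle⟩
  · rintro ⟨hle, hmin⟩
    refine IsLeast.csInf_eq ⟨⟨m.succ_pos, hle⟩, fun k ⟨hk, hlek⟩ => ?_⟩
    by_contra! hkm
    exact hmin k hk (by omega) hlek

theorem ladderTime_one_eq_zero_iff :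
    ladderTime X 1 ω = 0 ↔ ∀ k, ¬ X 0 ω ≤ X (k + 1) ω := by
  change sInf {k | 0 < k ∧ X 0 ω ≤ X k ω} = 0 ↔ _
  simp only [Nat.sInf_eq_zero, mem_ofPred_eq, lt_self_iff_false, false_and, false_or,
    eq_empty_iff_forall_notMem, not_and]
  exact ⟨fun h k => h (k + 1) k.succ_pos, fun h k hk => by
    obtain ⟨j, rfl⟩ := Nat.exists_eq_succ_of_ne_zero hk.ne'
    exact h j⟩

variable (X x y m) in
/-- `{X₀ = x, X₁ ⋡ x, …, X_m ⋡ x, X_{m+1} = y}`; for `x ≤ y` this is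
`{Y₁ = x, N₂ = m + 1, Y₂ = y}`. -/
def ladderStepEvent : Set Ω :=
  ⋂ i ∈ Finset.range (m + 2),
    X i ⁻¹' (if i = 0 then {x} else if i = m + 1 then {y} else (Ici x)ᶜ)

theorem mem_ladderStepEvent :
    ω ∈ ladderStepEvent X x y m ↔
      X 0 ω = x ∧ (∀ k, 0 < k → k ≤ m → ¬ x ≤ X k ω) ∧ X (m + 1) ω = y := by
  simp only [ladderStepEvent, mem_iInter, Finset.mem_range, mem_preimage]
  constructor
  · intro h
    refine ⟨by simpa using h 0 (by omega), fun k hk hkm => ?_,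
      by simpa using h (m + 1) (by omega)⟩
    have hkm' : k ≠ m + 1 := by omega
    simpa [hk.ne', hkm'] using h k (by omega)
  · rintro ⟨h0, hmid, hlast⟩ i hi
    split_ifs with hi0 him
    · exact hi0 ▸ h0
    · exact him ▸ hlast
    · exact hmid i (by omega) (by omega)

theorem ladderTime_one_of_mem_ladderStepEvent (hxy : x ≤ y) (h : ω ∈ ladderStepEvent X x y m) :
    ladderTime X 1 ω = m + 1 := by
  obtain ⟨h0, hmid, hlast⟩ := mem_ladderStepEvent.1 h
  subst h0
  exact ladderTime_one_eq_succ_iff.2 ⟨hlast ▸ hxy, hmid⟩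

theorem ladderStepEvent_subset (hxy : x ≤ y) :
    ladderStepEvent X x y m ⊆ {ω | ladderVar X 1 ω = y} ∩ {ω | ladderVar X 0 ω = x} := by
  intro ω h
  refine ⟨?_, (mem_ladderStepEvent.1 h).1⟩
  change X (ladderTime X 1 ω) ω = y
  rw [ladderTime_one_of_mem_ladderStepEvent hxy h]
  exact (mem_ladderStepEvent.1 h).2.2

-- `sInf ∅ = 0`: if no later `X k` lies above `X 0`, then `Y₂ = X 0`; that event is null.
theorem inter_ladderVar_subset :
    {ω | ladderVar X 1 ω = y} ∩ {ω | ladderVar X 0 ω = x} ⊆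
      (⋃ m, ladderStepEvent X x y m) ∪ ⋂ k, X (k + 1) ⁻¹' (Ici x)ᶜ := by
  rintro ω ⟨hy, hx : X 0 ω = x⟩
  change X (ladderTime X 1 ω) ω = y at hy
  subst hx
  rcases hN : ladderTime X 1 ω with _ | m
  · exact Or.inr (mem_iInter.2 (ladderTime_one_eq_zero_iff.1 hN))
  · rw [hN] at hy
    exact Or.inl (mem_iUnion.2 ⟨m, mem_ladderStepEvent.2
      ⟨rfl, (ladderTime_one_eq_succ_iff.1 hN).2, hy⟩⟩)

end Ladder

theorem ProbabilityTheory.iIndepFun.measure_iInter_preimage_eq_zero {Ω β : Type*}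
    [MeasurableSpace Ω] [MeasurableSpace β] {P : Measure Ω} {Y : ℕ → Ω → β}
    (hY : iIndepFun Y P) {s : Set β} (hs : MeasurableSet s) {q : ℝ≥0∞} (hq : q < 1)
    (hle : ∀ k, P (Y k ⁻¹' s) ≤ q) : P (⋂ k, Y k ⁻¹' s) = 0 := by
  refine le_antisymm (ge_of_tendsto' (ENNReal.tendsto_pow_atTop_nhds_zero_of_lt_one hq)
    fun n => ?_) zero_le
  calc P (⋂ k, Y k ⁻¹' s) ≤ P (⋂ k ∈ Finset.range n, Y k ⁻¹' s) :=
        measure_mono fun ω h => mem_iInter₂.2 fun k _ => mem_iInter.1 h k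
    _ = ∏ k ∈ Finset.range n, P (Y k ⁻¹' s) :=
        hY.measure_inter_preimage_eq_mul _ fun _ _ => hs
    _ ≤ q ^ n := by simpa using Finset.prod_le_pow_card (Finset.range n) _ q fun k _ => hle k

section Upf

variable {S : Type*} [PartialOrder S] {f : S → ℝ≥0}

theorem coe_le_upf (x : S) : (f x : ℝ≥0∞) ≤ upf f x :=
  ENNReal.le_tsum (⟨x, le_rfl⟩ : {t : S // x ≤ t})

theorem upf_pos (hsupp : ∀ x, 0 < f x) (x : S) : 0 < upf f x :=
  (ENNReal.coe_pos.2 (hsupp x)).trans_le (coe_le_upf x)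

theorem upf_le_one (hpdf : ∑' x, (f x : ℝ≥0∞) = 1) (x : S) : upf f x ≤ 1 :=
  hpdf ▸ ENNReal.tsum_comp_le_tsum_of_injective Subtype.val_injective fun t => (f t : ℝ≥0∞)

theorem upf_ne_top (hpdf : ∑' x, (f x : ℝ≥0∞) = 1) (x : S) : upf f x ≠ ∞ :=
  ((upf_le_one hpdf x).trans_lt ENNReal.one_lt_top).ne

noncomputable def rateFunction (f : S → ℝ≥0) (x : S) : ℝ≥0∞ :=
  f x / upf f x

end Upf

section Probability

variable {Ω S : Type*} [Countable S] [PartialOrder S] [MeasurableSpace S]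
  [MeasurableSingletonClass S] [MeasurableSpace Ω] {P : Measure Ω} {f : S → ℝ≥0}
  {X : ℕ → Ω → S} {x y : S}

theorem measure_preimage_Ici_eq_upf {Z : Ω → S} (hZ : Measurable Z)
    (hdist : ∀ x, P (Z ⁻¹' {x}) = f x) (x : S) : P (Z ⁻¹' Ici x) = upf f x := by
  rw [← tsum_measure_preimage_singleton (to_countable _)
    fun y _ => hZ (measurableSet_singleton y)]
  exact tsum_congr fun t => hdist t

variable [IsProbabilityMeasure P] (hmeas : ∀ i, Measurable (X i))
  (hdist : ∀ i x, P (X i ⁻¹' {x}) = f x) (hindep : iIndepFun X P)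
include hmeas hdist

theorem measure_preimage_compl_Ici (i : ℕ) (x : S) :
    P (X i ⁻¹' (Ici x)ᶜ) = 1 - upf f x := by
  rw [preimage_compl, prob_compl_eq_one_sub (hmeas i .of_discrete),
    measure_preimage_Ici_eq_upf (hmeas i) (hdist i)]

omit [IsProbabilityMeasure P] hdist in
theorem measurableSet_ladderStepEvent (m : ℕ) : MeasurableSet (ladderStepEvent X x y m) :=
  Finset.measurableSet_biInter _ fun i _ => hmeas i .of_discrete

include hindep

theorem measure_ladderStepEvent (m : ℕ) :
    P (ladderStepEvent X x y m) = f x * (1 - upf f x) ^ m * f y := by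
  rw [ladderStepEvent, hindep.measure_inter_preimage_eq_mul _ fun _ _ => .of_discrete,
    Finset.prod_range_succ, Finset.prod_range_succ']
  have hmid : ∀ k ∈ Finset.range m,
      P (X (k + 1) ⁻¹' if k + 1 = 0 then {x} else if k + 1 = m + 1 then {y} else (Ici x)ᶜ) =
        1 - upf f x := fun k hk => by
    rw [if_neg k.succ_ne_zero, if_neg (by simpa using (Finset.mem_range.1 hk).ne),
      measure_preimage_compl_Ici hmeas hdist]
  rw [Finset.prod_congr rfl hmid, Finset.prod_const, Finset.card_range, if_pos rfl,
    if_neg m.succ_ne_zero, if_pos rfl, hdist, hdist]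
  ring

theorem measure_iInter_preimage_compl_Ici_eq_zero (hsupp : ∀ x, 0 < f x) (x : S) :
    P (⋂ k, X (k + 1) ⁻¹' (Ici x)ᶜ) = 0 :=
  (hindep.precomp Nat.succ_injective).measure_iInter_preimage_eq_zero .of_discrete
    (ENNReal.sub_lt_self ENNReal.one_ne_top one_ne_zero (upf_pos hsupp x).ne')
    fun k => (measure_preimage_compl_Ici hmeas hdist (k + 1) x).le

theorem measure_ladderVar_one_inter_ladderVar_zero (hsupp : ∀ x, 0 < f x)
    (hpdf : ∑' x, (f x : ℝ≥0∞) = 1) (hxy : x ≤ y) :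
    P ({ω | ladderVar X 1 ω = y} ∩ {ω | ladderVar X 0 ω = x}) = f x * f y / upf f x := by
  have hunion : P (⋃ m, ladderStepEvent X x y m) = f x * f y / upf f x := by
    have hdisj : Pairwise (Disjoint on ladderStepEvent X x y) := fun m n hmn =>
      disjoint_left.2 fun ω hm hn => hmn <| Nat.succ_injective <|
        (ladderTime_one_of_mem_ladderStepEvent hxy hm).symm.trans
          (ladderTime_one_of_mem_ladderStepEvent hxy hn)
    rw [measure_iUnion hdisj (measurableSet_ladderStepEvent hmeas)]
    calc ∑' m, P (ladderStepEvent X x y m)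
        = f x * f y * ∑' m, (1 - upf f x) ^ m := by
          rw [← ENNReal.tsum_mul_left]
          exact tsum_congr fun m => by rw [measure_ladderStepEvent hmeas hdist hindep]; ring
      _ = f x * f y / upf f x := by
          rw [ENNReal.tsum_geometric, ENNReal.sub_sub_cancel ENNReal.one_ne_top
            (upf_le_one hpdf x), div_eq_mul_inv]
  refine le_antisymm ?_
    (hunion ▸ measure_mono (iUnion_subset fun m => ladderStepEvent_subset hxy))
  calc P ({ω | ladderVar X 1 ω = y} ∩ {ω | ladderVar X 0 ω = x})
      ≤ P ((⋃ m, ladderStepEvent X x y m) ∪ ⋂ k, X (k + 1) ⁻¹' (Ici x)ᶜ) :=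
        measure_mono inter_ladderVar_subset
    _ ≤ P (⋃ m, ladderStepEvent X x y m) + P (⋂ k, X (k + 1) ⁻¹' (Ici x)ᶜ) :=
        measure_union_le _ _
    _ = f x * f y / upf f x := by
        rw [hunion, measure_iInter_preimage_compl_Ici_eq_zero hmeas hdist hindep hsupp, add_zero]

theorem rateFunction_eq_of_le (hsupp : ∀ x, 0 < f x) (hpdf : ∑' x, (f x : ℝ≥0∞) = 1)
    (hunif : ∀ y x : S, x ≤ y →
      P[{ω | ladderVar X 0 ω = x} | {ω | ladderVar X 1 ω = y}]
        = (Nat.card {t : S // t ≤ y} : ℝ≥0∞)⁻¹)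
    (hxy : x ≤ y) : rateFunction f x = rateFunction f y := by
  set B := {ω | ladderVar X 1 ω = y}
  have hfy : (f y : ℝ≥0∞) ≠ 0 := ENNReal.coe_ne_zero.2 (hsupp y).ne'
  have hcond : ∀ z ≤ y,
      P[{ω | ladderVar X 0 ω = z} | B] = (P B)⁻¹ * (f z * f y / upf f z) :=
    fun z hz => by
      rw [cond_apply' (t := {ω | ladderVar X 0 ω = z}) (hmeas 0 (measurableSet_singleton z)),
        measure_ladderVar_one_inter_ladderVar_zero hmeas hdist hindep hsupp hpdf hz]
  have hB : P B ≠ 0 := by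
    refine (lt_of_lt_of_le ?_
      (measure_mono (inter_subset_left (t := {ω | ladderVar X 0 ω = y})))).ne'
    rw [measure_ladderVar_one_inter_ladderVar_zero hmeas hdist hindep hsupp hpdf le_rfl]
    exact ENNReal.div_pos (mul_ne_zero hfy hfy) (upf_ne_top hpdf y)
  have hjoint : f x * f y / upf f x = f y * f y / upf f y := by
    refine (ENNReal.mul_right_inj (ENNReal.inv_ne_zero.2 (measure_ne_top P B))
      (ENNReal.inv_ne_top.2 hB)).1 ?_
    rw [← hcond x hxy, ← hcond y le_rfl, hunif y x hxy, hunif y y le_rfl]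
  refine (ENNReal.mul_left_inj hfy ENNReal.coe_ne_top).1 ?_
  simpa only [rateFunction, ENNReal.mul_div_right_comm] using hjoint

end Probability

theorem constantRate_of_uniform_conditional_general
    {S : Type*} [Countable S] [PartialOrder S] [MeasurableSpace S]
    [MeasurableSingletonClass S]
    (hconn : ∀ x y : S, ∃ (n : ℕ) (c : ℕ → S), c 0 = x ∧ c n = y ∧
      ∀ i < n, c i ≤ c (i + 1) ∨ c (i + 1) ≤ c i)
    {Ω : Type*} [MeasurableSpace Ω] (P : Measure Ω) [IsProbabilityMeasure P]
    (f : S → ℝ≥0)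
    (hsupp : ∀ x : S, 0 < f x)
    (hpdf : ∑' x : S, (f x : ℝ≥0∞) = 1)
    (X : ℕ → Ω → S)
    (hmeas : ∀ i, Measurable (X i))
    (hindep : iIndepFun X P)
    (hdist : ∀ i (x : S), P (X i ⁻¹' {x}) = (f x : ℝ≥0∞))
    (hunif : ∀ y x : S, x ≤ y →
      P[{ω | ladderVar X 0 ω = x} | {ω | ladderVar X 1 ω = y}]
        = (Nat.card {t : S // t ≤ y} : ℝ≥0∞)⁻¹) :
    ∃ α : ℝ, 0 < α ∧ ∀ x : S, (f x : ℝ≥0∞) = ENNReal.ofReal α * upf f x := by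
  rcases isEmpty_or_nonempty S with hS | ⟨⟨x₀⟩⟩
  · exact ⟨1, one_pos, isEmptyElim⟩
  have hrate : ∀ x, rateFunction f x = rateFunction f x₀ := fun x => by
    obtain ⟨n, c, rfl, rfl, hc⟩ := hconn x x₀
    exact eq_of_comparable_chain
      (fun _ _ => rateFunction_eq_of_le hmeas hdist hindep hsupp hpdf hunif) hc
  have hr_ne_top : rateFunction f x₀ ≠ ∞ :=
    ENNReal.div_ne_top ENNReal.coe_ne_top (upf_pos hsupp x₀).ne'
  refine ⟨(rateFunction f x₀).toReal, ENNReal.toReal_pos ?_ hr_ne_top, fun x => ?_⟩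
  · exact (ENNReal.div_pos (ENNReal.coe_ne_zero.2 (hsupp x₀).ne') (upf_ne_top hpdf x₀)).ne'
  · rw [ENNReal.ofReal_toReal hr_ne_top, ← hrate x, rateFunction,
      ENNReal.div_mul_cancel (upf_pos hsupp x).ne' (upf_ne_top hpdf x)]

/-- Let `(S, ⪯)` be a connected standard discrete poset and let
`Y₁, Y₂, …` be the ladder variables of an IID sequence with common PDF `f` of support
`S`. If for every `y` the conditional distribution of `Y₁` given `Y₂ = y` is uniform
on `D[y]`, then `f` has constant rate. -/
theorem constantRate_of_uniform_conditional
    {S : Type*} [Countable S] [PartialOrder S] [MeasurableSpace S]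
    [MeasurableSingletonClass S]
    (hfin : ∀ x : S, {t : S | t ≤ x}.Finite)
    (hconn : ∀ x y : S, ∃ (n : ℕ) (c : ℕ → S), c 0 = x ∧ c n = y ∧
      ∀ i < n, c i ≤ c (i + 1) ∨ c (i + 1) ≤ c i)
    {Ω : Type*} [MeasurableSpace Ω] (P : Measure Ω) [IsProbabilityMeasure P]
    (f : S → ℝ≥0)
    (hsupp : ∀ x : S, 0 < f x)
    (hpdf : ∑' x : S, (f x : ℝ≥0∞) = 1)
    (X : ℕ → Ω → S)
    (hmeas : ∀ i, Measurable (X i))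
    (hindep : iIndepFun X P)
    (hdist : ∀ i (x : S), P (X i ⁻¹' {x}) = (f x : ℝ≥0∞))
    (hunif : ∀ y x : S, x ≤ y →
      P[{ω | ladderVar X 0 ω = x} | {ω | ladderVar X 1 ω = y}]
        = (Nat.card {t : S // t ≤ y} : ℝ≥0∞)⁻¹) :
    ∃ α : ℝ, 0 < α ∧ ∀ x : S, (f x : ℝ≥0∞) = ENNReal.ofReal α * upf f x :=
  constantRate_of_uniform_conditional_general hconn P f hsupp hpdf X hmeas hindep hdist hunif
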